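/- arXiv:1007.4356 — 4 statements merged into one kernel-verified Lean document; each statement's English description precedes it below -/
import Mathlib

section
/- Let N be an admissible algebra with admissible projection π and let λ : N → Ann(N) be any linear map vanishing on Ann(N). Then there exists c ∈ N with π(c) = 0 such that λ(u) = π(cu) for all u ∈ N. -/
open Finset

/-- Annihilator `Ann(N) = {u ∈ N : uN = 0}` of a non-unital commutative ℂ-algebra. -/
def annN (N : Type*) [NonUnitalCommRing N] [Module ℂ N] [IsScalarTower ℂ N N] :
    Submodule ℂ N where
  carrier := {u | ∀ v : N, u * v = 0}
  add_mem' := fun ha hb v => by rw [add_mul, ha v, hb v, add_zero]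
  zero_mem' := fun v => zero_mul v
  smul_mem' := fun c a ha v => by rw [smul_mul_assoc, ha v, smul_zero]

/-- The descending chain of ideals: `npow N j` is `N^j` for `j ≥ 1`
(`N^1 = N`, `N^{j+1} = span(N·N^j)`; `npow N 0 := ⊤` by convention). -/
def npow (N : Type*) [NonUnitalCommRing N] [Module ℂ N] : ℕ → Submodule ℂ N
  | 0 => ⊤
  | 1 => ⊤
  | (j+2) => Submodule.span ℂ {x : N | ∃ u : N, ∃ v ∈ npow N (j+1), x = u * v}

/-- Powers `u^m` of an element in a non-unital commutative ring
(`upow u 0 := 0` by convention; only `m ≥ 1` is used). -/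
def upow {N : Type*} [NonUnitalCommRing N] (u : N) : ℕ → N
  | 0 => 0
  | 1 => u
  | (m+2) => u * upow u (m+1)

/-! In a nilpotent algebra every `c ∉ Ann(N)` can be multiplied into `Ann(N) \ {0}`: keep
multiplying by elements that do not kill it; the product must become annihilating before it
would reach `N^(ν+1) = 0`. Hence `c ↦ (u ↦ π(cu))` maps `N` onto a subspace of the maps
`N → Ann(N)` vanishing on `Ann(N)`, with kernel exactly `Ann(N)`. As `Ann(N)` is a line, both
`N ⧸ Ann(N)` and `Hom(N ⧸ Ann(N), Ann(N))` have dimension `dim N - 1`, so every such map,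
in particular `λ`, is attained by some `c₀`; then `c = c₀ - π c₀` also satisfies `π c = 0`. -/

namespace LinearMap

variable {K V W : Type*} [Field K] [AddCommGroup V] [Module K V] [FiniteDimensional K V]
  [AddCommGroup W] [Module K W] [FiniteDimensional K W]

theorem mem_range_of_ker_eq_of_finrank_eq_one (hW : Module.finrank K W = 1)
    {A : Submodule K V} {B : V →ₗ[K] V →ₗ[K] W} (hker : ker B = A)
    (hBA : ∀ c, A ≤ ker (B c)) {f : V →ₗ[K] W} (hf : A ≤ ker f) :
    f ∈ range B := by
  let S := range (lcomp K W A.mkQ)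
  have mem_S (g : V →ₗ[K] W) (hg : A ≤ ker g) : g ∈ S := ⟨A.liftQ g hg, A.liftQ_mkQ g hg⟩
  have finrank_S : Module.finrank K S = Module.finrank K (V ⧸ A) := by
    rw [finrank_range_of_inj (lcomp_injective_of_surjective _ A.mkQ_surjective),
      Module.finrank_linearMap, hW, mul_one]
  have finrank_range : Module.finrank K (range B) = Module.finrank K (V ⧸ A) := by
    have := finrank_range_add_finrank_ker B
    have := A.finrank_quotient_add_finrank
    rw [hker] at *
    omega
  have range_le : range B ≤ S := by
    rintro _ ⟨c, rfl⟩
    exact mem_S (B c) (hBA c)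
  rw [Submodule.eq_of_le_of_finrank_le range_le (finrank_S.trans finrank_range.symm).le]
  exact mem_S f hf

end LinearMap

section Nilpotent

variable {N : Type*} [NonUnitalCommRing N] [Module ℂ N]

theorem mul_mem_npow (u : N) : ∀ {j} {v : N}, v ∈ npow N j → u * v ∈ npow N (j + 1)
  | 0, _, _ => trivial
  | _ + 1, v, hv => Submodule.subset_span ⟨u, v, hv, rfl⟩

theorem npow_succ_le : ∀ j, npow N (j + 1) ≤ npow N j
  | 0 | 1 => le_top
  | j + 2 => Submodule.span_le.mpr fun _ ⟨u, _, hv, hx⟩ =>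
      hx ▸ mul_mem_npow u (npow_succ_le (j + 1) hv)

theorem npow_antitone : Antitone (npow N) :=
  antitone_nat_of_succ_le npow_succ_le

variable [IsScalarTower ℂ N N] {ν : ℕ}

theorem exists_mul_mem_annN_ne_zero_of_mem_npow (hnil : npow N (ν + 1) = ⊥) :
    ∀ k j, ν + 1 ≤ j + k → ∀ x ∈ npow N j, x ∉ annN N →
      ∃ v : N, x * v ∈ annN N ∧ x * v ≠ 0
  | 0, j, hj, x, hx, hxA => by
    have : x ∈ npow N (ν + 1) := npow_antitone hj hx
    rw [hnil, Submodule.mem_bot] at this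
    exact absurd (this ▸ (annN N).zero_mem) hxA
  | k + 1, j, hj, x, hx, hxA => by
    obtain ⟨u, hu⟩ := not_forall.mp hxA
    by_cases hxu : x * u ∈ annN N
    · exact ⟨u, hxu, hu⟩
    · obtain ⟨v, hv⟩ := exists_mul_mem_annN_ne_zero_of_mem_npow hnil k (j + 1) (by omega)
        (x * u) (mul_comm x u ▸ mul_mem_npow u hx) hxu
      exact ⟨u * v, mul_assoc x u v ▸ hv⟩

theorem exists_mul_mem_annN_ne_zero (hnil : npow N (ν + 1) = ⊥) {x : N} (hx : x ∉ annN N) :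
    ∃ v : N, x * v ∈ annN N ∧ x * v ≠ 0 :=
  exists_mul_mem_annN_ne_zero_of_mem_npow hnil ν 1 (by omega) x trivial hx

variable [SMulCommClass ℂ N N]

theorem ker_compr₂_mul_eq_annN (hnil : npow N (ν + 1) = ⊥) {π : N →ₗ[ℂ] N}
    (hπr : ∀ u, π u ∈ annN N) (hπid : ∀ u ∈ annN N, π u = u) :
    LinearMap.ker ((LinearMap.mul ℂ N).compr₂ (π.codRestrict (annN N) hπr)) = annN N := by
  ext c
  simp only [LinearMap.mem_ker, LinearMap.ext_iff, LinearMap.compr₂_apply, LinearMap.mul_apply',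
    LinearMap.zero_apply, Subtype.ext_iff, LinearMap.codRestrict_apply, ZeroMemClass.coe_zero]
  refine ⟨fun h => ?_, fun hc u => by rw [hc u, map_zero]⟩
  by_contra hc
  obtain ⟨v, hvA, hv0⟩ := exists_mul_mem_annN_ne_zero hnil hc
  exact hv0 (hπid _ hvA ▸ h v)

end Nilpotent

/-- For an admissible algebra `N` with admissible projection `π` and any linear
map `λ : N → Ann(N)` vanishing on `Ann(N)`, there is `c ∈ N` with `π(c) = 0` and
`λ(u) = π(cu)` for all `u`. -/
theorem stmt5 (N : Type*) [NonUnitalCommRing N] [Module ℂ N] [SMulCommClass ℂ N N]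
    [IsScalarTower ℂ N N] [FiniteDimensional ℂ N]
    (ν : ℕ) (hnil : npow N (ν + 1) = ⊥) (hann : Module.finrank ℂ (annN N) = 1)
    (π : N →ₗ[ℂ] N) (hπr : ∀ u : N, π u ∈ annN N) (hπid : ∀ u ∈ annN N, π u = u)
    (lam : N →ₗ[ℂ] N) (hlr : ∀ u : N, lam u ∈ annN N) (hlz : ∀ u ∈ annN N, lam u = 0) :
    ∃ c : N, π c = 0 ∧ ∀ u : N, lam u = π (c * u) := by
  let B := (LinearMap.mul ℂ N).compr₂ (π.codRestrict (annN N) hπr)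
  have hBA (c : N) : annN N ≤ LinearMap.ker (B c) := fun u hu => by
    simp [B, mul_comm c u, hu c]
  have hlamA : annN N ≤ LinearMap.ker (lam.codRestrict (annN N) hlr) := fun u hu => by
    simp [hlz u hu]
  obtain ⟨c₀, hc₀⟩ := LinearMap.mem_range_of_ker_eq_of_finrank_eq_one hann
    (ker_compr₂_mul_eq_annN hnil hπr hπid) hBA hlamA
  refine ⟨c₀ - π c₀, by rw [map_sub, hπid _ (hπr c₀), sub_self], fun u => ?_⟩
  rw [sub_mul, hπr c₀ u, sub_zero]
  exact congr(Subtype.val ($hc₀ u)).symm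
end

section
/- With the notation of a nil-polynomial P = ω ∘ exp₂ ∘ φ on W arising from an admissible algebra N of nil-index ν, if dim N ≥ 2 (equivalently W ≠ {0}), then the top homogeneous component P^{[ν]} is not identically zero. -/
/-! Since `N · N^ν = N^(ν+1) = 0`, the nonzero space `N^ν` lies in the line `Ann(N)`, on which `ω`
does not vanish. Polarization (the coefficient of `t` in `(w + t u)^n`) shows that `N^n` is spanned
by `n`-th powers, so `ω(u^ν) ≠ 0` for some `u`. As `dim N ≥ 2` forces `ν ≥ 2`, adding to `u` a
suitable element of `Ann(N)` moves it into `ker ω = φ(W)` without changing `u^ν`. -/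

open Finset

section Polarization

variable {K V : Type*} [Field K] [Infinite K] [AddCommGroup V] [Module K V]

theorem eq_zero_of_forall_sum_mul_pow_eq_zero {n : ℕ} {a : ℕ → K}
    (h : ∀ t : K, ∑ j ∈ range n, a j * t ^ j = 0) {k : ℕ} (hk : k < n) : a k = 0 := by
  set q : Polynomial K := ∑ j ∈ range n, Polynomial.monomial j (a j)
  have hq : q = 0 := Polynomial.funext fun t => by
    simp [q, Polynomial.eval_finsetSum, h t]
  simpa [q, Polynomial.finsetSum_coeff, Polynomial.coeff_monomial, hk] using
    congrArg (Polynomial.coeff · k) hq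

theorem Submodule.mem_of_forall_sum_pow_smul_mem (S : Submodule K V) {n : ℕ} {c : ℕ → V}
    (h : ∀ t : K, ∑ j ∈ range n, t ^ j • c j ∈ S) {k : ℕ} (hk : k < n) : c k ∈ S := by
  rw [← Submodule.Quotient.mk_eq_zero, ← Module.forall_dual_apply_eq_zero_iff K]
  intro ℓ
  refine eq_zero_of_forall_sum_mul_pow_eq_zero (a := fun j => ℓ (S.mkQ (c j))) (fun t => ?_) hk
  have h0 : S.mkQ (∑ j ∈ range n, t ^ j • c j) = 0 := (Submodule.Quotient.mk_eq_zero S).mpr (h t)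
  simpa [map_sum, mul_comm] using congrArg ℓ h0

end Polarization

theorem LinearMap.apply_ne_zero_of_finrank_eq_one {K V : Type*} [Field K] [AddCommGroup V]
    [Module K V] {S : Submodule K V} (hS : Module.finrank K S = 1) (f : V →ₗ[K] K)
    {a p : V} (ha : a ∈ S) (hfa : f a ≠ 0) (hp : p ∈ S) (hp0 : p ≠ 0) : f p ≠ 0 := by
  obtain ⟨c, hc⟩ := (finrank_eq_one_iff_of_nonzero' (⟨p, hp⟩ : S) (by simpa using hp0)).mp hS
    ⟨a, ha⟩
  have hap : a = c • p := (congrArg Subtype.val hc).symm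
  intro hfp
  exact hfa (by rw [hap, map_smul, hfp, smul_zero])

section Annihilator

variable {N : Type*} [NonUnitalCommRing N] [Module ℂ N] [IsScalarTower ℂ N N]

theorem npow_le_annN {j : ℕ} (h : npow N (j + 2) = ⊥) : npow N (j + 1) ≤ annN N := by
  intro p hp v
  have hvp : v * p ∈ npow N (j + 2) := Submodule.subset_span ⟨v, p, hp, rfl⟩
  rw [h, Submodule.mem_bot] at hvp
  rwa [mul_comm]

theorem upow_add_of_mem_annN (u : N) {b : N} (hb : b ∈ annN N) (m : ℕ) :
    upow (u + b) (m + 2) = upow u (m + 2) := by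
  have hb' : ∀ v : N, b * v = 0 := hb
  induction m with
  | zero =>
    change (u + b) * (u + b) = u * u
    rw [add_mul, mul_add, hb', mul_comm u b, hb', add_zero, add_zero]
  | succ m ih =>
    change (u + b) * upow (u + b) (m + 2) = u * upow u (m + 2)
    rw [ih, add_mul, hb', add_zero]

end Annihilator

section NilpotentAlgebra

variable {N : Type*} [NonUnitalCommRing N] [Module ℂ N] [SMulCommClass ℂ N N]
  [IsScalarTower ℂ N N]

variable (N) in
def powSpan (m : ℕ) : Submodule ℂ N :=
  Submodule.span ℂ (Set.range fun w : N => upow w m)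

theorem inr_upow_succ (u : N) (m : ℕ) :
    ((upow u (m + 1) : N) : Unitization ℂ N) = (u : Unitization ℂ N) ^ (m + 1) := by
  induction m with
  | zero => rw [zero_add, pow_one]; rfl
  | succ m ih => rw [show upow u (m + 2) = u * upow u (m + 1) from rfl, Unitization.inr_mul, ih,
      pow_succ' _ (m + 1)]

theorem inr_upow_add_smul (w u : N) (t : ℂ) (n : ℕ) :
    ((upow (w + t • u) (n + 1) : N) : Unitization ℂ N) = ∑ k ∈ range (n + 2),
      t ^ k • (n + 1).choose k •
        ((u : Unitization ℂ N) ^ k * (w : Unitization ℂ N) ^ (n + 1 - k)) := by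
  rw [inr_upow_succ, Unitization.inr_add, Unitization.inr_smul, add_comm, add_pow]
  refine sum_congr rfl fun k _ => ?_
  rw [smul_pow, smul_mul_assoc, smul_mul_assoc, ← Nat.cast_comm, ← nsmul_eq_mul]

theorem mul_upow_mem_powSpan (u w : N) (m : ℕ) : u * upow w (m + 1) ∈ powSpan N (m + 2) := by
  have h := ((powSpan N (m + 2)).comap (Unitization.sndHom ℂ ℂ N)).mem_of_forall_sum_pow_smul_mem
    (k := 1) (fun t => by
      rw [← inr_upow_add_smul w u t (m + 1)]
      exact Submodule.subset_span ⟨w + t • u, rfl⟩) (by omega)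
  rw [Nat.choose_one_right, pow_one, show m + 2 - 1 = m + 1 by omega, ← inr_upow_succ,
    ← Unitization.inr_mul, Submodule.mem_comap, map_nsmul, Unitization.sndHom_apply,
    Unitization.snd_inr, ← Nat.cast_smul_eq_nsmul ℂ] at h
  exact (Submodule.smul_mem_iff _ (by norm_cast)).mp h

theorem npow_le_powSpan (j : ℕ) : npow N (j + 1) ≤ powSpan N (j + 1) := by
  induction j with
  | zero => exact fun x _ => Submodule.subset_span ⟨x, rfl⟩
  | succ j ih =>
    refine Submodule.span_le.mpr ?_
    rintro _ ⟨u, v, hv, rfl⟩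
    have hv' := ih hv
    clear hv
    induction hv' using Submodule.span_induction with
    | mem _ hw => obtain ⟨w, rfl⟩ := hw; exact mul_upow_mem_powSpan u w j
    | zero => simp
    | add _ _ _ _ hx hy => rw [mul_add]; exact add_mem hx hy
    | smul c _ _ hx => rw [mul_smul_comm]; exact Submodule.smul_mem _ c hx

theorem exists_upow_apply_ne_zero (f : N →ₗ[ℂ] ℂ) {m : ℕ} {p : N} (hp : p ∈ npow N (m + 1))
    (hfp : f p ≠ 0) : ∃ u : N, f (upow u (m + 1)) ≠ 0 := by
  by_contra! h
  have hle : powSpan N (m + 1) ≤ LinearMap.ker f :=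
    Submodule.span_le.mpr (Set.range_subset_iff.mpr h)
  exact hfp (hle (npow_le_powSpan m hp))

end NilpotentAlgebra

theorem stmt10_general (N : Type*) [NonUnitalCommRing N] [Module ℂ N] [SMulCommClass ℂ N N]
    [IsScalarTower ℂ N N]
    (ν : ℕ) (hnil : npow N (ν + 1) = ⊥) (hν : npow N ν ≠ ⊥)
    (hann : Module.finrank ℂ (annN N) = 1)
    (W : Type*) [AddCommGroup W] [Module ℂ W]
    (ω : N →ₗ[ℂ] ℂ) (hω : ∃ a ∈ annN N, ω a ≠ 0)
    (φ : W →ₗ[ℂ] N)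
    (hrange : LinearMap.range φ = LinearMap.ker ω)
    (hdim : 2 ≤ Module.finrank ℂ N) :
    ∃ x : W, ω (upow (φ x) ν) ≠ 0 := by
  obtain ⟨a, ha, hωa⟩ := hω
  obtain ⟨m, rfl⟩ : ∃ m, ν = m + 2 := by
    match ν, hnil, hν with
    | 0, hnil, hν => exact absurd hnil hν -- `npow N 0 = npow N 1 = ⊤`
    | 1, hnil, _ =>
      rw [top_unique (npow_le_annN (j := 0) hnil), finrank_top] at hann
      omega
    | m + 2, _, _ => exact ⟨m, rfl⟩
  obtain ⟨p, hp, hp0⟩ := Submodule.exists_mem_ne_zero_of_ne_bot hν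
  have hωp : ω p ≠ 0 :=
    ω.apply_ne_zero_of_finrank_eq_one hann ha hωa (npow_le_annN hnil hp) hp0
  obtain ⟨u, hu⟩ := exists_upow_apply_ne_zero ω hp hωp
  have hb : -(ω u / ω a) • a ∈ annN N := Submodule.smul_mem _ _ ha
  obtain ⟨x, hx⟩ : u + -(ω u / ω a) • a ∈ LinearMap.range φ := by
    rw [hrange, LinearMap.mem_ker, map_add, map_smul, smul_eq_mul, neg_mul,
      div_mul_cancel₀ _ hωa, add_neg_cancel]
  exact ⟨x, by rwa [hx, upow_add_of_mem_annN u hb]⟩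

/-- For a nil-polynomial `P = ω ∘ exp₂ ∘ φ` on `W` arising from an
admissible algebra `N` of nil-index `ν`, if `dim N ≥ 2` then the top homogeneous
component `P^{[ν]}(x) = ω(φ(x)^ν)/ν!` is not identically zero. -/
theorem stmt10 (N : Type*) [NonUnitalCommRing N] [Module ℂ N] [SMulCommClass ℂ N N]
    [IsScalarTower ℂ N N] [FiniteDimensional ℂ N]
    (ν : ℕ) (hnil : npow N (ν + 1) = ⊥) (hν : npow N ν ≠ ⊥)
    (hann : Module.finrank ℂ (annN N) = 1)
    (W : Type*) [AddCommGroup W] [Module ℂ W] [FiniteDimensional ℂ W]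
    (ω : N →ₗ[ℂ] ℂ) (hω : ∃ a ∈ annN N, ω a ≠ 0)
    (φ : W →ₗ[ℂ] N) (hinj : Function.Injective φ)
    (hrange : LinearMap.range φ = LinearMap.ker ω)
    (hdim : 2 ≤ Module.finrank ℂ N) :
    ∃ x : W, ω (upow (φ x) ν) ≠ 0 :=
  stmt10_general N ν hnil hν hann W ω hω φ hrange hdim
end

section
/- Let P be a nil-polynomial on W arising from (N, ω, φ), with symmetric multilinear forms ω_ℓ(x¹,…,x^ℓ) = ω(φ(x¹)⋯φ(x^ℓ)). Define a commutative product on W by requiring ω₂(x·y, z) = ω₃(x,y,z) for all z (well-defined since ω₂ is non-degenerate). Then φ(x)φ(y) − φ(x·y) ∈ Ann(N) for all x, y ∈ W. -/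
/-!
Put `d = φ x φ y - φ (x · y)`. The defining identity of the product says `ω (d n) = 0` for
`n ∈ ker ω = range φ`, and `d a = 0` for the annihilator element `a` with `ω a ≠ 0`; so `ω (d N) = 0`.
Now, in a nilpotent algebra, the only elements `u` with `ω (u N) = 0` are annihilators: otherwise some
nonzero `u n₁ ⋯ nₖ` lies in `Ann(N)`, the line on which `ω` is nonzero, although `ω` kills it.
-/

open Finset

section NilpotentAlgebra

variable {N : Type*} [NonUnitalCommRing N] [Module ℂ N]

lemma npow_succ_succ_eq_bot {j : ℕ} (h : npow N (j + 1) = ⊥) : npow N (j + 2) = ⊥ := by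
  rw [npow, h, eq_bot_iff, Submodule.span_le]
  rintro x ⟨u, v, hv, rfl⟩
  rw [(Submodule.mem_bot ℂ).1 hv, mul_zero]
  exact Submodule.zero_mem _

lemma npow_eq_bot_of_le {ν m : ℕ} (hnil : npow N (ν + 1) = ⊥) (hm : ν + 1 ≤ m) :
    npow N m = ⊥ := by
  induction m, hm using Nat.le_induction with
  | base => exact hnil
  | succ m hm ih =>
    obtain ⟨j, rfl⟩ : ∃ j, m = j + 1 := ⟨m - 1, by omega⟩
    exact npow_succ_succ_eq_bot ih

lemma mul_mem_npow_succ {m : ℕ} {u : N} (hu : u ∈ npow N m) (w : N) :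
    u * w ∈ npow N (m + 1) := by
  match m with
  | 0 => exact Submodule.mem_top
  | j + 1 =>
    rw [npow]
    exact Submodule.subset_span ⟨w, u, hu, mul_comm u w⟩

variable [IsScalarTower ℂ N N]

lemma eq_zero_of_mem_annN_of_map_eq_zero (hann : Module.finrank ℂ (annN N) = 1)
    {ω : N →ₗ[ℂ] ℂ} {a : N} (ha : a ∈ annN N) (hωa : ω a ≠ 0)
    {b : N} (hb : b ∈ annN N) (hωb : ω b = 0) : b = 0 := by
  have ha0 : (⟨a, ha⟩ : annN N) ≠ 0 := fun h ↦
    hωa (by rw [show a = 0 from congrArg Subtype.val h, map_zero])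
  obtain ⟨c, hc⟩ := (finrank_eq_one_iff_of_nonzero' _ ha0).1 hann ⟨b, hb⟩
  replace hc : c • a = b := congrArg Subtype.val hc
  have hc0 : c = 0 := by
    simpa [hωa, ← hc] using hωb
  rw [← hc, hc0, zero_smul]

/-- Downward induction along `N ⊇ N² ⊇ ⋯ ⊇ N^{ν+1} = 0`: each `u * w` lies one step deeper and
is still `ω`-orthogonal to `N`, so it is in `Ann(N)`; being `ω`-null, it vanishes. -/
lemma mem_annN_of_mem_npow {ν : ℕ} (hnil : npow N (ν + 1) = ⊥) {ω : N →ₗ[ℂ] ℂ}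
    (hωinj : ∀ b ∈ annN N, ω b = 0 → b = 0) {m : ℕ} {u : N} (hu : u ∈ npow N m)
    (hωu : ∀ z, ω (u * z) = 0) : u ∈ annN N := by
  induction hk : ν + 1 - m generalizing m u with
  | zero =>
    rw [npow_eq_bot_of_le hnil (by omega), Submodule.mem_bot] at hu
    rw [hu]
    exact Submodule.zero_mem _
  | succ k ih =>
    intro w
    have huw : u * w ∈ annN N :=
      ih (mul_mem_npow_succ hu w) (fun z ↦ by rw [mul_assoc]; exact hωu _) (by omega)
    exact hωinj _ huw (hωu w)

lemma mem_annN_of_forall_map_mul_eq_zero {ν : ℕ} (hnil : npow N (ν + 1) = ⊥)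
    {ω : N →ₗ[ℂ] ℂ} (hωinj : ∀ b ∈ annN N, ω b = 0 → b = 0) {u : N}
    (hu : ∀ z, ω (u * z) = 0) : u ∈ annN N :=
  mem_annN_of_mem_npow hnil hωinj (m := 0) Submodule.mem_top hu

/-- Split `z` along `N = ker ω ⊕ ℂ a` and use `u * a = 0`. -/
lemma map_mul_eq_zero_of_forall_ker {ω : N →ₗ[ℂ] ℂ} {a : N} (ha : a ∈ annN N) (hωa : ω a ≠ 0)
    {u : N} (hu : ∀ k ∈ LinearMap.ker ω, ω (u * k) = 0) (z : N) : ω (u * z) = 0 := by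
  set c := ω z / ω a
  have hk : z - c • a ∈ LinearMap.ker ω := by
    simp [c, div_mul_cancel₀ _ hωa]
  have hz : u * z = u * (z - c • a) + c • (a * u) := by
    rw [mul_sub, mul_comm u (c • a), smul_mul_assoc]; abel
  rw [hz, ha u, smul_zero, add_zero]
  exact hu _ hk

end NilpotentAlgebra

theorem stmt11_general (N : Type*) [NonUnitalCommRing N] [Module ℂ N]
    [IsScalarTower ℂ N N]
    (ν : ℕ) (hnil : npow N (ν + 1) = ⊥) (hann : Module.finrank ℂ (annN N) = 1)
    (W : Type*) [AddCommGroup W] [Module ℂ W]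
    (ω : N →ₗ[ℂ] ℂ) (hω : ∃ a ∈ annN N, ω a ≠ 0)
    (φ : W →ₗ[ℂ] N)
    (hrange : LinearMap.range φ = LinearMap.ker ω)
    (mul : W → W → W)
    (hmul : ∀ x y z : W, ω (φ (mul x y) * φ z) = ω (φ x * φ y * φ z)) :
    ∀ x y : W, φ x * φ y - φ (mul x y) ∈ annN N := by
  obtain ⟨a, ha, hωa⟩ := hω
  intro x y
  refine mem_annN_of_forall_map_mul_eq_zero hnil
    (fun b hb ↦ eq_zero_of_mem_annN_of_map_eq_zero hann ha hωa hb) ?_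
  refine map_mul_eq_zero_of_forall_ker ha hωa fun k hk ↦ ?_
  obtain ⟨w, rfl⟩ : k ∈ LinearMap.range φ := hrange ▸ hk
  rw [sub_mul, map_sub, hmul, sub_self]

/-- With `ω_ℓ(x¹,…,x^ℓ) = ω(φ(x¹)⋯φ(x^ℓ))` and the commutative product on
`W` defined by `ω₂(x·y, z) = ω₃(x,y,z)` for all `z`, one has
`φ(x)φ(y) − φ(x·y) ∈ Ann(N)` for all `x, y ∈ W`. -/
theorem stmt11 (N : Type*) [NonUnitalCommRing N] [Module ℂ N] [SMulCommClass ℂ N N]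
    [IsScalarTower ℂ N N] [FiniteDimensional ℂ N]
    (ν : ℕ) (hnil : npow N (ν + 1) = ⊥) (hann : Module.finrank ℂ (annN N) = 1)
    (W : Type*) [AddCommGroup W] [Module ℂ W] [FiniteDimensional ℂ W]
    (ω : N →ₗ[ℂ] ℂ) (hω : ∃ a ∈ annN N, ω a ≠ 0)
    (φ : W →ₗ[ℂ] N) (hinj : Function.Injective φ)
    (hrange : LinearMap.range φ = LinearMap.ker ω)
    (mul : W → W → W)
    (hmul : ∀ x y z : W, ω (φ (mul x y) * φ z) = ω (φ x * φ y * φ z)) :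
    ∀ x y : W, φ x * φ y - φ (mul x y) ∈ annN N :=
  stmt11_general N ν hnil hann W ω hω φ hrange mul hmul
end

section
/- Let N be an admissible algebra, π an admissible projection, and suppose a ∈ N satisfies π(a) = 0 and π(au) = 0 for all u ∈ N (i.e. a is in the radical of b_π restricted to N and in ker π). Then a = 0. -/
/-
Elements `x` with `π x = 0` and `π (x * N) = 0` form an ideal. If such an `x` lies in `N^m`,
then every `x * v` is such an element of `N^(m+1)`, so by descending induction from
`N^(ν+1) = 0` we get `x * N = 0`. Then `x ∈ Ann(N)`, where `π` is the identity, so `x = π x = 0`.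
-/

open Finset

theorem mul_mem_npow_succ_s19 {N : Type*} [NonUnitalCommRing N] [Module ℂ N] {m : ℕ} {x : N}
    (hx : x ∈ npow N m) (v : N) : x * v ∈ npow N (m + 1) := by
  match m with
  | 0 => exact Submodule.mem_top
  | m + 1 => exact Submodule.subset_span ⟨v, x, hx, mul_comm x v⟩

section Radical

variable {N : Type*} [NonUnitalCommRing N] [Module ℂ N] [IsScalarTower ℂ N N]
  {π : N →ₗ[ℂ] N}

theorem eq_zero_of_mul_eq_zero_of_proj_eq_zero (hπid : ∀ u ∈ annN N, π u = u) {x : N}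
    (hx : π x = 0) (hxN : ∀ v, x * v = 0) : x = 0 := by
  rw [← hπid x hxN, hx]

theorem eq_zero_of_mem_npow_of_proj_mul_eq_zero {ν : ℕ} (hnil : npow N (ν + 1) = ⊥)
    (hπid : ∀ u ∈ annN N, π u = u) (k : ℕ) :
    ∀ m, m + k = ν + 1 → ∀ x ∈ npow N m, π x = 0 → (∀ v, π (x * v) = 0) → x = 0 := by
  induction k with
  | zero =>
    rintro m rfl x hx - -
    simpa [hnil] using hx
  | succ k ih =>
    intro m hmk x hx hx0 hxv
    refine eq_zero_of_mul_eq_zero_of_proj_eq_zero hπid hx0 fun v => ?_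
    refine ih (m + 1) (by omega) (x * v) (mul_mem_npow_succ_s19 hx v) (hxv v) fun w => ?_
    rw [mul_assoc]
    exact hxv (v * w)

end Radical

theorem stmt19_general (N : Type*) [NonUnitalCommRing N] [Module ℂ N]
    [IsScalarTower ℂ N N]
    (ν : ℕ) (hnil : npow N (ν + 1) = ⊥)
    (π : N →ₗ[ℂ] N) (hπid : ∀ u ∈ annN N, π u = u)
    (a : N) (ha : π a = 0) (hab : ∀ u : N, π (a * u) = 0) :
    a = 0 :=
  eq_zero_of_mem_npow_of_proj_mul_eq_zero hnil hπid (ν + 1) 0 (zero_add _) a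
    Submodule.mem_top ha hab

/-- For an admissible algebra `N` with admissible projection `π`, if
`a ∈ N` satisfies `π(a) = 0` and `π(au) = 0` for all `u ∈ N`, then `a = 0`. -/
theorem stmt19 (N : Type*) [NonUnitalCommRing N] [Module ℂ N] [SMulCommClass ℂ N N]
    [IsScalarTower ℂ N N] [FiniteDimensional ℂ N]
    (ν : ℕ) (hnil : npow N (ν + 1) = ⊥) (hann : Module.finrank ℂ (annN N) = 1)
    (π : N →ₗ[ℂ] N) (hπr : ∀ u : N, π u ∈ annN N) (hπid : ∀ u ∈ annN N, π u = u)
    (a : N) (ha : π a = 0) (hab : ∀ u : N, π (a * u) = 0) :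
    a = 0 :=
  stmt19_general N ν hnil π hπid a ha hab
end
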